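/- arXiv:1401.3191 — 4 statements merged into one kernel-verified Lean document; each statement's English description precedes it below -/
import Mathlib

section
/- Let $\xi_{k,\ell,n}$ and $\zeta_{k,\ell,n}$ be random variables such that for each $n$ the $\sigma$-algebras $\sigma(\xi_{k,\ell,n}, \zeta_{k,\ell,n} : \ell \in \mathbb{N})$, $k \in \mathbb{N}$, are independent, and $\sup_{k,\ell,n} \mathbb{E}[\xi_{k,\ell,n}^8 + \zeta_{k,\ell,n}^8] < \infty$. Let $K_n = nK + o(n)$, $L_n = nL + o(n)$ with $K, L > 0$. Then $n^{-2} \sum_{k=1}^{K_n} \sum_{\ell=1}^{L_n} (\xi_{k,\ell,n}\zeta_{k,\ell,n} - \mathbb{E}[\xi_{k,\ell,n}\zeta_{k,\ell,n}]) \to 0$ almost surely as $n \to \infty$. -/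
/-!
Let `X` be the centred products `ξ ζ - E[ξ ζ]`. Since `(ξ ζ)⁴ ≤ (ξ⁸ + ζ⁸) / 2` and, by Jensen,
`E[ξ ζ]⁴ ≤ E[(ξ ζ)⁴]`, the fourth moments of the `X` are bounded by `8 M`. The row sums
`Y_k = ∑_ℓ X_{k,ℓ}` are independent and centred with `E[Y_k⁴] ≤ L_n⁴ · 8 M` (power-mean inequality),
and expanding the fourth power of a sum of independent centred variables gives
`E[S_n⁴] ≤ (3 K_n + 1) K_n L_n⁴ · 8 M = O(n⁶)` for the double sum `S_n`. Hence
`E[(n⁻² S_n)⁴] = O(n⁻²)` is summable, so `∑_n (n⁻² S_n)⁴ < ∞` almost surely and `n⁻² S_n → 0`.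
-/

open MeasureTheory ProbabilityTheory Filter Finset Topology Asymptotics

section Moments

variable {Ω : Type*} [MeasurableSpace Ω] {μ : Measure Ω}

lemma MeasureTheory.MemLp.integrable_pow_of_le [IsFiniteMeasure μ] {f : Ω → ℝ} {p m : ℕ}
    (hf : MemLp f p μ) (hm : m ≤ p) : Integrable (fun ω => f ω ^ m) μ := by
  have := (hf.mono_exponent (by exact_mod_cast hm : (m : ENNReal) ≤ p)).integrable_norm_pow'
  exact (integrable_norm_iff (hf.1.pow m)).mp (by simpa only [Pi.pow_apply, norm_pow] using this)

lemma MeasureTheory.memLp_of_integrable_pow {f : Ω → ℝ} {p : ℕ} (hp : Even p) (hp0 : p ≠ 0)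
    (hf : AEStronglyMeasurable f μ) (h : Integrable (fun ω => f ω ^ p) μ) : MemLp f p μ := by
  rw [← integrable_norm_rpow_iff hf (by exact_mod_cast hp0) (by simp)]
  simpa [Real.norm_eq_abs, hp.pow_abs] using h

lemma pow_integral_le_integral_pow [IsProbabilityMeasure μ] {f : Ω → ℝ} {p : ℕ} (hp : Even p)
    (hf : Integrable f μ) (hfp : Integrable (fun ω => f ω ^ p) μ) :
    (∫ ω, f ω ∂μ) ^ p ≤ ∫ ω, f ω ^ p ∂μ :=
  hp.convexOn_pow.map_integral_le (continuous_pow p).continuousOn isClosed_univ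
    (ae_of_all _ fun _ => Set.mem_univ _) hf hfp

lemma sum_pow_four_le_card_pow_three_mul {ι : Type*} (s : Finset ι) (x : ι → ℝ) :
    (∑ i ∈ s, x i) ^ 4 ≤ (#s : ℝ) ^ 3 * ∑ i ∈ s, x i ^ 4 := by
  have h2 := sq_sum_le_card_mul_sum_sq (s := s) (f := x)
  have h4 := sq_sum_le_card_mul_sum_sq (s := s) (f := fun i => x i ^ 2)
  calc (∑ i ∈ s, x i) ^ 4 = ((∑ i ∈ s, x i) ^ 2) ^ 2 := by ring
    _ ≤ (#s * ∑ i ∈ s, x i ^ 2) ^ 2 := pow_le_pow_left₀ (sq_nonneg _) h2 2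
    _ = #s ^ 2 * (∑ i ∈ s, x i ^ 2) ^ 2 := by ring
    _ ≤ #s ^ 2 * (#s * ∑ i ∈ s, (x i ^ 2) ^ 2) := by gcongr
    _ = #s ^ 3 * ∑ i ∈ s, x i ^ 4 := by simp_rw [← pow_mul]; ring

lemma integral_sum_pow_four_le [IsFiniteMeasure μ] {ι : Type*} {f : ι → Ω → ℝ}
    (hf : ∀ i, MemLp (f i) 4 μ) {C : ℝ} (hC : ∀ i, ∫ ω, f i ω ^ 4 ∂μ ≤ C) (s : Finset ι) :
    ∫ ω, (∑ i ∈ s, f i ω) ^ 4 ∂μ ≤ #s ^ 4 * C := by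
  have hf4 i : Integrable (fun ω => f i ω ^ 4) μ := (hf i).integrable_pow_of_le le_rfl
  calc ∫ ω, (∑ i ∈ s, f i ω) ^ 4 ∂μ ≤ ∫ ω, (#s : ℝ) ^ 3 * ∑ i ∈ s, f i ω ^ 4 ∂μ :=
        integral_mono ((memLp_finsetSum s fun i _ => hf i).integrable_pow_of_le le_rfl)
          ((integrable_finsetSum s fun i _ => hf4 i).const_mul _)
          fun ω => sum_pow_four_le_card_pow_three_mul s _
    _ = #s ^ 3 * ∑ i ∈ s, ∫ ω, f i ω ^ 4 ∂μ := by
        rw [integral_const_mul, integral_finsetSum s fun i _ => hf4 i]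
    _ ≤ #s ^ 3 * (#s * C) := by
        gcongr
        simpa using sum_le_card_nsmul s _ C fun i _ => hC i
    _ = #s ^ 4 * C := by ring

lemma mul_pow_four_le (a b : ℝ) : (a * b) ^ 4 ≤ (a ^ 8 + b ^ 8) / 2 := by
  nlinarith [sq_nonneg (a ^ 4 - b ^ 4)]

lemma memLp_mul_of_integrable_pow_eight {ξ ζ : Ω → ℝ} (hξ : AEStronglyMeasurable ξ μ)
    (hζ : AEStronglyMeasurable ζ μ) (h : Integrable (fun ω => ξ ω ^ 8 + ζ ω ^ 8) μ) :
    MemLp (fun ω => ξ ω * ζ ω) 4 μ := by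
  refine memLp_of_integrable_pow (by decide) (by norm_num) (hξ.mul hζ) ?_
  refine (h.div_const 2).mono ((hξ.mul hζ).pow 4) (ae_of_all _ fun ω => ?_)
  simp only [Real.norm_eq_abs]
  rw [abs_of_nonneg (by positivity), abs_of_nonneg (by positivity)]
  exact mul_pow_four_le _ _

lemma integral_sub_integral_pow_four_le [IsProbabilityMeasure μ] {f : Ω → ℝ}
    (hf : MemLp f 4 μ) :
    ∫ ω, (f ω - ∫ ω', f ω' ∂μ) ^ 4 ∂μ ≤ 16 * ∫ ω, f ω ^ 4 ∂μ := by
  set c := ∫ ω', f ω' ∂μ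
  have hf4 : Integrable (fun ω => f ω ^ 4) μ := hf.integrable_pow_of_le le_rfl
  have hc : c ^ 4 ≤ ∫ ω, f ω ^ 4 ∂μ :=
    pow_integral_le_integral_pow (by decide) (hf.integrable (by norm_num)) hf4
  have hle (ω : Ω) : (f ω - c) ^ 4 ≤ 8 * (f ω ^ 4 + c ^ 4) := by
    nlinarith [sq_nonneg (f ω + c), sq_nonneg (f ω ^ 2 - c ^ 2), sq_nonneg ((f ω + c) * (f ω - c))]
  have hsub : MemLp (fun ω => f ω - c) 4 μ := hf.sub (memLp_const c)
  calc ∫ ω, (f ω - c) ^ 4 ∂μ ≤ ∫ ω, 8 * (f ω ^ 4 + c ^ 4) ∂μ :=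
        integral_mono (hsub.integrable_pow_of_le le_rfl)
          ((hf4.add (integrable_const _)).const_mul 8) hle
    _ = 8 * (∫ ω, f ω ^ 4 ∂μ + c ^ 4) := by
        rw [integral_const_mul, integral_add hf4 (integrable_const _), integral_const]
        simp
    _ ≤ 16 * ∫ ω, f ω ^ 4 ∂μ := by linarith

lemma integral_mul_sub_integral_pow_four_le [IsProbabilityMeasure μ] {ξ ζ : Ω → ℝ}
    (hξ : AEStronglyMeasurable ξ μ) (hζ : AEStronglyMeasurable ζ μ)
    (h : Integrable (fun ω => ξ ω ^ 8 + ζ ω ^ 8) μ) :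
    ∫ ω, (ξ ω * ζ ω - ∫ ω', ξ ω' * ζ ω' ∂μ) ^ 4 ∂μ ≤ 8 * ∫ ω, (ξ ω ^ 8 + ζ ω ^ 8) ∂μ := by
  have hP := memLp_mul_of_integrable_pow_eight hξ hζ h
  calc _ ≤ 16 * ∫ ω, (ξ ω * ζ ω) ^ 4 ∂μ := integral_sub_integral_pow_four_le hP
    _ ≤ 16 * ∫ ω, (ξ ω ^ 8 + ζ ω ^ 8) / 2 ∂μ :=
        mul_le_mul_of_nonneg_left (integral_mono (hP.integrable_pow_of_le le_rfl)
          (h.div_const 2) fun ω => mul_pow_four_le _ _) (by norm_num)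
    _ = 8 * ∫ ω, (ξ ω ^ 8 + ζ ω ^ 8) ∂μ := by rw [integral_div]; ring

end Moments

section Independence

variable {Ω : Type*} [MeasurableSpace Ω] {μ : Measure Ω}

lemma ProbabilityTheory.iIndep.iIndepFun {ι β : Type*} [MeasurableSpace β]
    {m : ι → MeasurableSpace Ω} (h : iIndep m μ) {f : ι → Ω → β}
    (hf : ∀ i, Measurable[m i] (f i)) : iIndepFun f μ := by
  rw [iIndepFun_iff_iIndep]
  exact iIndep_of_iIndep_of_le h fun i => (hf i).comap_le

variable [IsProbabilityMeasure μ]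

lemma ProbabilityTheory.IndepFun.integral_add_pow {X Y : Ω → ℝ} (hXY : IndepFun X Y μ) {p : ℕ}
    (hX : MemLp X p μ) (hY : MemLp Y p μ) :
    ∫ ω, (X ω + Y ω) ^ p ∂μ =
      ∑ m ∈ range (p + 1), (∫ ω, X ω ^ m ∂μ) * (∫ ω, Y ω ^ (p - m) ∂μ) * p.choose m := by
  have hpow (m : ℕ) : IndepFun (fun ω => X ω ^ m) (fun ω => Y ω ^ (p - m)) μ :=
    hXY.comp (measurable_id.pow_const m) (measurable_id.pow_const (p - m))
  simp_rw [add_pow]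
  rw [integral_finsetSum]
  · refine sum_congr rfl fun m _ => ?_
    rw [integral_mul_const, (hpow m).integral_fun_mul_eq_mul_integral
      (hX.1.pow m) (hY.1.pow (p - m))]
  · intro m hm
    exact ((hpow m).integrable_mul (hX.integrable_pow_of_le (by simp at hm; omega))
      (hY.integrable_pow_of_le (Nat.sub_le p m))).mul_const _

lemma ProbabilityTheory.IndepFun.integral_add_pow_four_of_integral_eq_zero {X Y : Ω → ℝ}
    (hXY : IndepFun X Y μ) (hX : MemLp X 4 μ) (hY : MemLp Y 4 μ)
    (hX0 : ∫ ω, X ω ∂μ = 0) (hY0 : ∫ ω, Y ω ∂μ = 0) :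
    ∫ ω, (X ω + Y ω) ^ 4 ∂μ =
      ∫ ω, X ω ^ 4 ∂μ + 6 * (∫ ω, X ω ^ 2 ∂μ) * (∫ ω, Y ω ^ 2 ∂μ) + ∫ ω, Y ω ^ 4 ∂μ := by
  rw [hXY.integral_add_pow (by exact_mod_cast hX) (by exact_mod_cast hY)]
  simp only [Nat.reduceAdd, sum_range_succ, range_one, sum_singleton, pow_zero, integral_const,
    probReal_univ, smul_eq_mul, mul_one, tsub_zero, one_mul, Nat.choose, Nat.cast_one, pow_one,
    hX0, Nat.add_one_sub_one, zero_mul, add_zero, Nat.cast_ofNat, Nat.reduceSub, hY0, mul_zero,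
    tsub_self]
  ring

variable {ι : Type*} {f : ι → Ω → ℝ}

lemma ProbabilityTheory.iIndepFun.integral_sum_sq (hf : iIndepFun f μ)
    (hf2 : ∀ i, MemLp (f i) 2 μ) (hf0 : ∀ i, ∫ ω, f i ω ∂μ = 0) (s : Finset ι) :
    ∫ ω, (∑ i ∈ s, f i ω) ^ 2 ∂μ = ∑ i ∈ s, ∫ ω, f i ω ^ 2 ∂μ := by
  have hsum0 : ∫ ω, (∑ i ∈ s, f i) ω ∂μ = 0 := by
    simp [Finset.sum_apply, integral_finsetSum s fun i _ => (hf2 i).integrable one_le_two, hf0]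
  have := IndepFun.variance_sum (s := s) (fun i _ => hf2 i) fun i _ j _ hij => hf.indepFun hij
  rw [variance_of_integral_eq_zero (memLp_finsetSum' s fun i _ => hf2 i).1.aemeasurable hsum0]
    at this
  simpa [Finset.sum_apply, variance_of_integral_eq_zero (hf2 _).1.aemeasurable (hf0 _)] using this

lemma ProbabilityTheory.iIndepFun.integral_sum_pow_four_le (hf : iIndepFun f μ)
    (hf4 : ∀ i, MemLp (f i) 4 μ) (hf0 : ∀ i, ∫ ω, f i ω ∂μ = 0) (s : Finset ι) :
    ∫ ω, (∑ i ∈ s, f i ω) ^ 4 ∂μ ≤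
      3 * (∑ i ∈ s, ∫ ω, f i ω ^ 2 ∂μ) ^ 2 + ∑ i ∈ s, ∫ ω, f i ω ^ 4 ∂μ := by
  classical
  induction s using Finset.induction_on with
  | empty => simp
  | insert j s hj ih =>
    have hT : IndepFun (fun ω => ∑ i ∈ s, f i ω) (f j) μ := by
      simpa only [← Finset.sum_apply] using
        hf.indepFun_finsetSum_of_notMem₀ (fun i => (hf4 i).1.aemeasurable) hj
    have hT4 : MemLp (fun ω => ∑ i ∈ s, f i ω) 4 μ := memLp_finsetSum s fun i _ => hf4 i
    have hT0 : ∫ ω, ∑ i ∈ s, f i ω ∂μ = 0 := by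
      simp [integral_finsetSum s fun i _ => (hf4 i).integrable (by norm_num), hf0]
    have hT2 := hf.integral_sum_sq (fun i => (hf4 i).mono_exponent (by norm_num)) hf0 s
    simp only [sum_insert hj, add_comm (f j _)]
    rw [hT.integral_add_pow_four_of_integral_eq_zero hT4 (hf4 j) hT0 (hf0 j), hT2]
    nlinarith [sq_nonneg (∫ ω, f j ω ^ 2 ∂μ)]

lemma ProbabilityTheory.iIndepFun.integral_sum_pow_four_le_of_le (hf : iIndepFun f μ)
    (hf4 : ∀ i, MemLp (f i) 4 μ) (hf0 : ∀ i, ∫ ω, f i ω ∂μ = 0) {C : ℝ}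
    (hC : ∀ i, ∫ ω, f i ω ^ 4 ∂μ ≤ C) (s : Finset ι) :
    ∫ ω, (∑ i ∈ s, f i ω) ^ 4 ∂μ ≤ (3 * #s + 1) * #s * C := by
  have hsq i : (∫ ω, f i ω ^ 2 ∂μ) ^ 2 ≤ ∫ ω, f i ω ^ 4 ∂μ := by
    have h4 : Integrable (fun ω => (f i ω ^ 2) ^ 2) μ := by
      simpa only [← pow_mul, Nat.reduceMul] using (hf4 i).integrable_pow_of_le le_rfl
    simpa only [← pow_mul, Nat.reduceMul] using
      pow_integral_le_integral_pow even_two ((hf4 i).integrable_pow_of_le (by norm_num)) h4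
  have h4 : ∑ i ∈ s, ∫ ω, f i ω ^ 4 ∂μ ≤ #s * C := by
    simpa using sum_le_card_nsmul s _ C fun i _ => hC i
  have h2 : (∑ i ∈ s, ∫ ω, f i ω ^ 2 ∂μ) ^ 2 ≤ #s * ∑ i ∈ s, ∫ ω, f i ω ^ 4 ∂μ :=
    sq_sum_le_card_mul_sum_sq.trans (by gcongr with i; exact hsq i)
  calc ∫ ω, (∑ i ∈ s, f i ω) ^ 4 ∂μ
      ≤ 3 * (∑ i ∈ s, ∫ ω, f i ω ^ 2 ∂μ) ^ 2 + ∑ i ∈ s, ∫ ω, f i ω ^ 4 ∂μ :=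
        hf.integral_sum_pow_four_le hf4 hf0 s
    _ ≤ (3 * #s + 1) * ∑ i ∈ s, ∫ ω, f i ω ^ 4 ∂μ := by linarith
    _ ≤ (3 * #s + 1) * (#s * C) := by gcongr
    _ = (3 * #s + 1) * #s * C := by ring

end Independence

section Convergence

variable {Ω : Type*} [MeasurableSpace Ω] {μ : Measure Ω}

lemma tendsto_zero_of_tendsto_abs_pow {u : ℕ → ℝ} {p : ℕ} (hp : p ≠ 0)
    (h : Tendsto (fun n => |u n| ^ p) atTop (𝓝 0)) : Tendsto u atTop (𝓝 0) := by
  rw [tendsto_zero_iff_abs_tendsto_zero, Function.comp_def]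
  have := h.rpow_const (p := (p : ℝ)⁻¹) (Or.inr (by positivity))
  simpa [Real.pow_rpow_inv_natCast (abs_nonneg _) hp,
    Real.zero_rpow (inv_ne_zero (Nat.cast_ne_zero.2 hp))] using this

lemma ae_tendsto_zero_of_summable_integral_abs_pow {f : ℕ → Ω → ℝ} {p : ℕ} (hp : p ≠ 0)
    (hf : ∀ n, MemLp (f n) p μ) (h : Summable fun n => ∫ ω, |f n ω| ^ p ∂μ) :
    ∀ᵐ ω ∂μ, Tendsto (fun n => f n ω) atTop (𝓝 0) := by
  have hint n : Integrable (fun ω => |f n ω| ^ p) μ := by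
    simpa only [Real.norm_eq_abs] using (hf n).integrable_norm_pow hp
  have htsum : ∑' n, eLpNorm (fun ω => |f n ω| ^ p) 1 μ ≠ ⊤ := by
    simp_rw [eLpNorm_one_eq_lintegral_enorm, ← ofReal_integral_norm_eq_lintegral_enorm (hint _)]
    rw [← ENNReal.ofReal_tsum_of_nonneg (fun n => integral_nonneg fun _ => norm_nonneg _)
      (by simpa [Real.norm_eq_abs] using h)]
    exact ENNReal.ofReal_ne_top
  filter_upwards [summable_norm_of_tsum_eLpNorm_ne_top le_rfl (fun n => (hint n).1) htsum]
    with ω hω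
  exact tendsto_zero_of_tendsto_abs_pow hp (by simpa using hω.of_norm.tendsto_atTop_zero)

lemma summable_of_le_of_tendsto_mul_inv_sq {a b : ℕ → ℝ} {c : ℝ} (ha : ∀ n, 0 ≤ a n)
    (hb : Tendsto b atTop (𝓝 c)) (hab : ∀ n, a n ≤ b n * (1 / (n : ℝ) ^ 2)) : Summable a := by
  refine Summable.of_nonneg_of_le ha hab (summable_of_isBigO_nat
    (Real.summable_one_div_nat_pow.2 one_lt_two) ?_)
  simpa only [one_mul] using
    (hb.isBigO_one ℝ).mul (isBigO_refl (fun n : ℕ => 1 / (n : ℝ) ^ 2) atTop)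

end Convergence

lemma integral_double_sum_pow_four_le {Ω ι κ : Type*} [MeasurableSpace Ω] {μ : Measure Ω}
    [IsProbabilityMeasure μ] {X : ι → κ → Ω → ℝ} (t : Finset κ)
    (hindep : iIndepFun (fun k ω => ∑ ℓ ∈ t, X k ℓ ω) μ) (hX : ∀ k ℓ, MemLp (X k ℓ) 4 μ)
    (hX0 : ∀ k ℓ, ∫ ω, X k ℓ ω ∂μ = 0) {C : ℝ} (hC : ∀ k ℓ, ∫ ω, X k ℓ ω ^ 4 ∂μ ≤ C)
    (s : Finset ι) :
    ∫ ω, (∑ k ∈ s, ∑ ℓ ∈ t, X k ℓ ω) ^ 4 ∂μ ≤ (3 * #s + 1) * #s * (#t ^ 4 * C) :=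
  hindep.integral_sum_pow_four_le_of_le (fun k => memLp_finsetSum t fun ℓ _ => hX k ℓ)
    (fun k => by simp [integral_finsetSum t fun ℓ _ => (hX k ℓ).integrable (by norm_num), hX0])
    (fun k => integral_sum_pow_four_le (hX k) (hC k) t) s

lemma iIndepFun_sum_mul_sub {Ω ι κ : Type*} [MeasurableSpace Ω] {μ : Measure Ω}
    {ξ ζ : ι → κ → Ω → ℝ}
    (h : iIndep (fun k => ⨆ ℓ, MeasurableSpace.comap (ξ k ℓ) (borel ℝ) ⊔
      MeasurableSpace.comap (ζ k ℓ) (borel ℝ)) μ) (t : Finset κ) (c : ι → κ → ℝ) :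
    iIndepFun (fun k ω => ∑ ℓ ∈ t, (ξ k ℓ ω * ζ k ℓ ω - c k ℓ)) μ := by
  refine h.iIndepFun fun k => Finset.measurable_sum _ fun ℓ _ => .sub_const (.mul ?_ ?_) _
  exacts [.of_comap_le (le_iSup_of_le ℓ le_sup_left), .of_comap_le (le_iSup_of_le ℓ le_sup_right)]

lemma zpow_neg_two_pow_four_mul_eq (n a b : ℕ) (C : ℝ) :
    ((n : ℝ) ^ (-2 : ℤ)) ^ 4 * ((3 * a + 1) * a * (b ^ 4 * C)) =
      (3 * (a / n) + 1 / n) * (a / n) * (b / n) ^ 4 * C * (1 / (n : ℝ) ^ 2) := by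
  rcases eq_or_ne n 0 with rfl | hn
  · simp -- both sides vanish, since `(0 : ℝ)⁻¹ = 0`
  · field_simp

theorem stmt2_general
    {Ω : Type*} [MeasureSpace Ω] [IsProbabilityMeasure (ℙ : Measure Ω)]
    (ξ ζ : ℕ → ℕ → ℕ → Ω → ℝ)
    (hmeasξ : ∀ n k ℓ, Measurable (ξ n k ℓ))
    (hmeasζ : ∀ n k ℓ, Measurable (ζ n k ℓ))
    (hindep : ∀ n, iIndep
      (fun k : ℕ => ⨆ ℓ : ℕ,
        (MeasurableSpace.comap (ξ n k ℓ) (borel ℝ) ⊔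
         MeasurableSpace.comap (ζ n k ℓ) (borel ℝ))) ℙ)
    (M : ℝ)
    (hmom : ∀ n k ℓ, ∫ ω, ((ξ n k ℓ ω) ^ 8 + (ζ n k ℓ ω) ^ 8) ∂ℙ ≤ M)
    (hint : ∀ n k ℓ, Integrable (fun ω => (ξ n k ℓ ω) ^ 8 + (ζ n k ℓ ω) ^ 8) ℙ)
    (K L : ℝ)
    (Kn Ln : ℕ → ℕ)
    (hKn : Tendsto (fun n => (Kn n : ℝ) / n) atTop (nhds K))
    (hLn : Tendsto (fun n => (Ln n : ℝ) / n) atTop (nhds L)) :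
    ∀ᵐ ω ∂(ℙ : Measure Ω),
      Tendsto (fun n : ℕ =>
        (n : ℝ) ^ (-2 : ℤ) *
          ∑ k ∈ Finset.Icc 1 (Kn n), ∑ ℓ ∈ Finset.Icc 1 (Ln n),
            (ξ n k ℓ ω * ζ n k ℓ ω - ∫ ω', ξ n k ℓ ω' * ζ n k ℓ ω' ∂ℙ))
        atTop (nhds 0) := by
  set X : ℕ → ℕ → ℕ → Ω → ℝ := fun n k ℓ ω =>
    ξ n k ℓ ω * ζ n k ℓ ω - ∫ ω', ξ n k ℓ ω' * ζ n k ℓ ω' ∂ℙ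
  have hP n k ℓ : MemLp (fun ω => ξ n k ℓ ω * ζ n k ℓ ω) 4 ℙ :=
    memLp_mul_of_integrable_pow_eight (hmeasξ n k ℓ).aestronglyMeasurable
      (hmeasζ n k ℓ).aestronglyMeasurable (hint n k ℓ)
  have hX n k ℓ : MemLp (X n k ℓ) 4 ℙ := (hP n k ℓ).sub (memLp_const _)
  have hX0 n k ℓ : ∫ ω, X n k ℓ ω ∂ℙ = 0 := by
    simp [X, integral_sub ((hP n k ℓ).integrable (by norm_num)) (integrable_const _)]
  have hX4 n k ℓ : ∫ ω, X n k ℓ ω ^ 4 ∂ℙ ≤ 8 * M :=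
    (integral_mul_sub_integral_pow_four_le (hmeasξ n k ℓ).aestronglyMeasurable
      (hmeasζ n k ℓ).aestronglyMeasurable (hint n k ℓ)).trans (by linarith [hmom n k ℓ])
  set b : ℕ → ℝ := fun n => (3 * (Kn n / n) + 1 / n) * (Kn n / n) * (Ln n / n) ^ 4 * (8 * M)
  have hb : Tendsto b atTop (𝓝 ((3 * K + 0) * K * L ^ 4 * (8 * M))) :=
    ((((hKn.const_mul 3).add tendsto_one_div_atTop_nhds_zero_nat).mul hKn).mul
      (hLn.pow 4)).mul_const _
  have hF (n : ℕ) :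
      ∫ ω, |(n : ℝ) ^ (-2 : ℤ) * ∑ k ∈ Icc 1 (Kn n), ∑ ℓ ∈ Icc 1 (Ln n), X n k ℓ ω| ^ 4 ∂ℙ
        ≤ b n * (1 / (n : ℝ) ^ 2) := by
    simp_rw [(by decide : Even 4).pow_abs, mul_pow, integral_const_mul, b,
      ← zpow_neg_two_pow_four_mul_eq]
    gcongr
    have := integral_double_sum_pow_four_le (Icc 1 (Ln n))
      (iIndepFun_sum_mul_sub (hindep n) _ _) (hX n) (hX0 n) (hX4 n) (Icc 1 (Kn n))
    rwa [Nat.card_Icc, Nat.card_Icc, add_tsub_cancel_right, add_tsub_cancel_right] at this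
  refine ae_tendsto_zero_of_summable_integral_abs_pow four_ne_zero (fun n => ?_)
    (summable_of_le_of_tendsto_mul_inv_sq (fun n => integral_nonneg fun _ => by positivity) hb hF)
  exact (memLp_finsetSum _ fun k _ => memLp_finsetSum _ fun ℓ _ => hX n k ℓ).const_mul _

theorem stmt2
    {Ω : Type*} [MeasureSpace Ω] [IsProbabilityMeasure (ℙ : Measure Ω)]
    (ξ ζ : ℕ → ℕ → ℕ → Ω → ℝ)
    (hmeasξ : ∀ n k ℓ, Measurable (ξ n k ℓ))
    (hmeasζ : ∀ n k ℓ, Measurable (ζ n k ℓ))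
    (hindep : ∀ n, iIndep
      (fun k : ℕ => ⨆ ℓ : ℕ,
        (MeasurableSpace.comap (ξ n k ℓ) (borel ℝ) ⊔
         MeasurableSpace.comap (ζ n k ℓ) (borel ℝ))) ℙ)
    (M : ℝ)
    (hmom : ∀ n k ℓ, ∫ ω, ((ξ n k ℓ ω) ^ 8 + (ζ n k ℓ ω) ^ 8) ∂ℙ ≤ M)
    (hint : ∀ n k ℓ, Integrable (fun ω => (ξ n k ℓ ω) ^ 8 + (ζ n k ℓ ω) ^ 8) ℙ)
    (K L : ℝ) (hK : 0 < K) (hL : 0 < L)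
    (Kn Ln : ℕ → ℕ) (hKn0 : ∀ n, 0 < Kn n) (hLn0 : ∀ n, 0 < Ln n)
    (hKn : Tendsto (fun n => (Kn n : ℝ) / n) atTop (nhds K))
    (hLn : Tendsto (fun n => (Ln n : ℝ) / n) atTop (nhds L)) :
    ∀ᵐ ω ∂(ℙ : Measure Ω),
      Tendsto (fun n : ℕ =>
        (n : ℝ) ^ (-2 : ℤ) *
          ∑ k ∈ Finset.Icc 1 (Kn n), ∑ ℓ ∈ Finset.Icc 1 (Ln n),
            (ξ n k ℓ ω * ζ n k ℓ ω - ∫ ω', ξ n k ℓ ω' * ζ n k ℓ ω' ∂ℙ))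
        atTop (nhds 0) :=
  stmt2_general ξ ζ hmeasξ hmeasζ hindep M hmom hint K L Kn Ln hKn hLn
end

section
/- Let $\xi_{k,j,n}$, $\zeta_{k,j,n}$ be random variables such that for each $n$ the $\sigma$-algebras $\sigma(\xi_{k,j,n}, \zeta_{k,j,n} : k \in \mathbb{N})$, $j \in \mathbb{N}$, are independent, and $\sup_{k,j,n} \mathbb{E}[\xi_{k,j,n}^8 + \zeta_{k,j,n}^8] < \infty$. Let $K_n = nK + o(n)$ with $K > 0$. Then $n^{-2} \sum_{k=1}^{K_n} k^{-1} \sum_{j=1}^{k} (\xi_{k,j,n}\zeta_{k,j,n} - \mathbb{E}[\xi_{k,j,n}\zeta_{k,j,n}]) \to 0$ almost surely as $n \to \infty$. -/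
/-!
Exchanging the order of summation writes `∑ₖ k⁻¹ ∑_{j ≤ k} ξζ` as `∑ⱼ Yⱼ` with
`Yⱼ = ∑_{j ≤ k ≤ Kₙ} k⁻¹ ξζ`, and the `Yⱼ` are independent. The eighth moments bound the variance
of each product `ξζ`; Cauchy–Schwarz over `k` together with `∑ k⁻² ≤ 2` gives `Var Yⱼ = O(Kₙ)`, so
the normalised sum has variance `O(Kₙ² / n⁴) = O(n⁻²)`. Summable variances force the centred
variables to tend to `0` almost surely, since `∑ₙ (Zₙ - 𝔼 Zₙ)²` has finite expectation.
-/

open MeasureTheory ProbabilityTheory Filter Finset Topology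

lemma sq_mul_le_pow_eight_add_pow_eight_add_one (a b : ℝ) :
    (a * b) ^ 2 ≤ a ^ 8 + b ^ 8 + 1 := by
  nlinarith [sq_nonneg (a ^ 2 - b ^ 2), sq_nonneg (a ^ 4 - 1), sq_nonneg (b ^ 4 - 1)]

lemma sum_Icc_inv_sq_le_two {j : ℕ} (hj : 1 ≤ j) (N : ℕ) :
    ∑ k ∈ Icc j N, ((k : ℝ)⁻¹) ^ 2 ≤ 2 := by
  calc ∑ k ∈ Icc j N, ((k : ℝ)⁻¹) ^ 2 ≤ ∑ k ∈ Ioo 0 (N + 1), ((k : ℝ) ^ 2)⁻¹ := by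
        simp only [inv_pow]
        refine sum_le_sum_of_subset_of_nonneg (fun k hk => ?_) fun _ _ _ => by positivity
        simp only [mem_Icc, mem_Ioo] at hk ⊢
        omega
    _ ≤ 2 := by simpa using sum_Ioo_inv_sq_le (α := ℝ) 0 (N + 1)

lemma sum_Icc_sum_Icc_comm {M : Type*} [AddCommMonoid M] (N : ℕ) (f : ℕ → ℕ → M) :
    ∑ k ∈ Icc 1 N, ∑ j ∈ Icc 1 k, f k j = ∑ j ∈ Icc 1 N, ∑ k ∈ Icc j N, f k j :=
  sum_comm' fun k j => by simp only [mem_Icc]; omega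

lemma summable_sq_div_sq_of_tendsto {a : ℕ → ℝ} {K : ℝ} (ha : Tendsto a atTop (𝓝 K)) :
    Summable fun n : ℕ => a n ^ 2 / (n : ℝ) ^ 2 := by
  obtain ⟨B, hB⟩ := isBounded_iff_forall_norm_le.1 (Metric.isBounded_range_of_tendsto a ha)
  refine .of_nonneg_of_le (fun n => by positivity) (fun n => ?_)
    ((Real.summable_one_div_nat_pow.2 one_lt_two).mul_left (B ^ 2))
  rw [mul_one_div]
  exact div_le_div_of_nonneg_right (sq_le_sq' (abs_le.1 (hB _ ⟨n, rfl⟩)).1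
    (abs_le.1 (hB _ ⟨n, rfl⟩)).2) (by positivity)

section

variable {Ω : Type*} [MeasurableSpace Ω] {μ : Measure Ω}

lemma memLp_two_mul_of_integrable_pow_eight [IsFiniteMeasure μ] {X Y : Ω → ℝ}
    (hX : AEStronglyMeasurable X μ) (hY : AEStronglyMeasurable Y μ)
    (h : Integrable (fun ω => X ω ^ 8 + Y ω ^ 8) μ) : MemLp (X * Y) 2 μ :=
  (memLp_two_iff_integrable_sq (hX.mul hY)).2 <|
    (h.add (integrable_const 1)).mono' ((hX.mul hY).pow 2) <| .of_forall fun ω => by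
      rw [Real.norm_of_nonneg (sq_nonneg _)]
      exact sq_mul_le_pow_eight_add_pow_eight_add_one (X ω) (Y ω)

lemma variance_mul_le_integral_pow_eight_add_one [IsProbabilityMeasure μ] {X Y : Ω → ℝ}
    (hX : AEStronglyMeasurable X μ) (hY : AEStronglyMeasurable Y μ)
    (h : Integrable (fun ω => X ω ^ 8 + Y ω ^ 8) μ) :
    Var[X * Y; μ] ≤ ∫ ω, (X ω ^ 8 + Y ω ^ 8) ∂μ + 1 := by
  calc Var[X * Y; μ] ≤ μ[(X * Y) ^ 2] := variance_le_expectation_sq (hX.mul hY)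
    _ ≤ ∫ ω, (X ω ^ 8 + Y ω ^ 8 + 1) ∂μ := by
      refine integral_mono (memLp_two_mul_of_integrable_pow_eight hX hY h).integrable_sq
        (h.add (integrable_const (1 : ℝ))) fun ω => ?_
      exact sq_mul_le_pow_eight_add_pow_eight_add_one (X ω) (Y ω)
    _ = ∫ ω, (X ω ^ 8 + Y ω ^ 8) ∂μ + 1 := by
      rw [integral_add h (integrable_const 1)]
      simp

lemma two_mul_covariance_le_variance_add_variance [IsFiniteMeasure μ] {X Y : Ω → ℝ}
    (hX : MemLp X 2 μ) (hY : MemLp Y 2 μ) : 2 * cov[X, Y; μ] ≤ Var[X; μ] + Var[Y; μ] := by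
  linarith [variance_sub hX hY, variance_nonneg (X - Y) μ]

lemma variance_sum_le_card_mul_sum_variance [IsFiniteMeasure μ] {ι : Type*} {s : Finset ι}
    {X : ι → Ω → ℝ} (hX : ∀ i ∈ s, MemLp (X i) 2 μ) :
    Var[fun ω => ∑ i ∈ s, X i ω; μ] ≤ #s * ∑ i ∈ s, Var[X i; μ] := by
  rw [variance_fun_sum' hX]
  calc ∑ i ∈ s, ∑ j ∈ s, cov[X i, X j; μ]
      ≤ ∑ i ∈ s, ∑ j ∈ s, (Var[X i; μ] + Var[X j; μ]) / 2 := by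
        gcongr with i hi j hj
        linarith [two_mul_covariance_le_variance_add_variance (hX i hi) (hX j hj)]
    _ = #s * ∑ i ∈ s, Var[X i; μ] := by
        simp only [add_div, sum_add_distrib, sum_const, ← sum_div, nsmul_eq_mul, ← mul_sum]
        ring

lemma variance_weighted_sum_le [IsFiniteMeasure μ] {ι : Type*} {s : Finset ι}
    {X : ι → Ω → ℝ} (c : ι → ℝ) (hX : ∀ i ∈ s, MemLp (X i) 2 μ) :
    Var[fun ω => ∑ i ∈ s, c i * X i ω; μ] ≤ #s * ∑ i ∈ s, c i ^ 2 * Var[X i; μ] := by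
  simpa only [variance_const_mul] using
    variance_sum_le_card_mul_sum_variance (X := fun i ω => c i * X i ω)
      fun i hi => (hX i hi).const_mul (c i)

theorem ae_tendsto_sub_integral_of_summable_variance [IsFiniteMeasure μ] {Z : ℕ → Ω → ℝ}
    (hZ : ∀ n, MemLp (Z n) 2 μ) (hsum : Summable fun n => Var[Z n; μ]) :
    ∀ᵐ ω ∂μ, Tendsto (fun n => Z n ω - μ[Z n]) atTop (𝓝 0) := by
  have hfin : ∑' n, evariance (Z n) μ ≠ ⊤ := by
    simp_rw [← (hZ _).ofReal_variance_eq]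
    rw [← ENNReal.ofReal_tsum_of_nonneg (fun n => variance_nonneg _ _) hsum]
    exact ENNReal.ofReal_ne_top
  have hmeas : ∀ n, AEMeasurable (fun ω => ‖Z n ω - μ[Z n]‖ₑ ^ 2) μ := fun n =>
    ((hZ n).aestronglyMeasurable.sub aestronglyMeasurable_const).enorm.pow_const 2
  have hlt : ∀ᵐ ω ∂μ, ∑' n, ‖Z n ω - μ[Z n]‖ₑ ^ 2 < ⊤ := by
    refine ae_lt_top' (AEMeasurable.tsum hmeas) ?_
    rwa [lintegral_tsum hmeas]
  filter_upwards [hlt] with ω hω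
  have hsq := (ENNReal.continuous_rpow_const (y := (2 : ℕ)⁻¹)).tendsto 0 |>.comp
    (ENNReal.tendsto_atTop_zero_of_tsum_ne_top hω.ne)
  simp only [Function.comp_def, ENNReal.pow_rpow_inv_natCast two_ne_zero] at hsq
  exact tendsto_zero_iff_enorm_tendsto_zero.2 (by simpa using hsq)

lemma variance_sum_inv_mul_sum_le [IsFiniteMeasure μ] {m : ℕ → MeasurableSpace Ω}
    (hm : iIndep m μ) {P : ℕ → ℕ → Ω → ℝ} (hPm : ∀ k j, Measurable[m j] (P k j))
    (hP : ∀ k j, MemLp (P k j) 2 μ) {C : ℝ} (hC : ∀ k j, Var[P k j; μ] ≤ C) (N : ℕ) :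
    Var[fun ω => ∑ k ∈ Icc 1 N, (k : ℝ)⁻¹ * ∑ j ∈ Icc 1 k, P k j ω; μ] ≤ 2 * C * N ^ 2 := by
  set Y : ℕ → Ω → ℝ := fun j ω => ∑ k ∈ Icc j N, (k : ℝ)⁻¹ * P k j ω
  have hC0 : 0 ≤ C := (variance_nonneg _ _).trans (hC 0 0)
  have hswap : (fun ω => ∑ k ∈ Icc 1 N, (k : ℝ)⁻¹ * ∑ j ∈ Icc 1 k, P k j ω) =
      ∑ j ∈ Icc 1 N, Y j := by
    ext ω
    simp only [mul_sum, Finset.sum_apply, Y]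
    exact sum_Icc_sum_Icc_comm N fun k j => (k : ℝ)⁻¹ * P k j ω
  have hY : ∀ j, MemLp (Y j) 2 μ := fun j =>
    memLp_finsetSum _ fun k _ => (hP k j).const_mul _
  have hYindep : iIndepFun Y μ :=
    (iIndepFun_iff_iIndep _ Y μ).2 <| iIndep_of_iIndep_of_le hm fun j =>
      (Finset.measurable_sum _ fun k _ => (hPm k j).const_mul _).comap_le
  have hYvar : ∀ j ∈ Icc 1 N, Var[Y j; μ] ≤ N * (2 * C) := by
    intro j hj
    have hj1 := (mem_Icc.1 hj).1
    have hcard : (#(Icc j N) : ℝ) ≤ N := by simp only [Nat.card_Icc]; norm_cast; omega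
    have hweights : ∑ k ∈ Icc j N, ((k : ℝ)⁻¹) ^ 2 * Var[P k j; μ] ≤ 2 * C :=
      calc ∑ k ∈ Icc j N, ((k : ℝ)⁻¹) ^ 2 * Var[P k j; μ]
          ≤ ∑ k ∈ Icc j N, ((k : ℝ)⁻¹) ^ 2 * C := by gcongr; exact hC k j
        _ ≤ 2 * C := by
          rw [← sum_mul]
          exact mul_le_mul_of_nonneg_right (sum_Icc_inv_sq_le_two hj1 N) hC0
    calc Var[Y j; μ] ≤ #(Icc j N) * ∑ k ∈ Icc j N, ((k : ℝ)⁻¹) ^ 2 * Var[P k j; μ] :=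
          variance_weighted_sum_le _ fun k _ => hP k j
      _ ≤ N * (2 * C) :=
          mul_le_mul hcard hweights
            (sum_nonneg fun k _ => mul_nonneg (sq_nonneg _) (variance_nonneg _ _))
            (Nat.cast_nonneg _)
  calc Var[fun ω => ∑ k ∈ Icc 1 N, (k : ℝ)⁻¹ * ∑ j ∈ Icc 1 k, P k j ω; μ]
      = ∑ j ∈ Icc 1 N, Var[Y j; μ] := by
        rw [hswap, IndepFun.variance_sum (fun j _ => hY j) fun i _ j _ hij =>
          hYindep.indepFun hij]
    _ ≤ ∑ j ∈ Icc 1 N, N * (2 * C) := sum_le_sum hYvar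
    _ = 2 * C * N ^ 2 := by simp only [sum_const, Nat.card_Icc, nsmul_eq_mul]; push_cast; ring

lemma const_mul_sum_mul_sum_sub_integral {ι κ : Type*} {P : ι → κ → Ω → ℝ}
    (hP : ∀ i j, Integrable (P i j) μ) (c : ℝ) (a : ι → ℝ) (s : Finset ι) (t : ι → Finset κ)
    (ω : Ω) :
    c * ∑ i ∈ s, a i * ∑ j ∈ t i, P i j ω - ∫ ω', c * ∑ i ∈ s, a i * ∑ j ∈ t i, P i j ω' ∂μ =
      c * ∑ i ∈ s, a i * ∑ j ∈ t i, (P i j ω - ∫ ω', P i j ω' ∂μ) := by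
  rw [integral_const_mul, ← mul_sub,
    integral_finsetSum _ fun i _ => (integrable_finsetSum _ fun j _ => hP i j).const_mul _,
    ← sum_sub_distrib]
  congr 2 with i
  rw [integral_const_mul, ← mul_sub, integral_finsetSum _ fun j _ => hP i j, ← sum_sub_distrib]

end

theorem stmt6_general
    {Ω : Type*} [MeasureSpace Ω] [IsProbabilityMeasure (ℙ : Measure Ω)]
    (ξ ζ : ℕ → ℕ → ℕ → Ω → ℝ)  -- ξ n k j, ζ n k j
    (hmeasξ : ∀ n k j, Measurable (ξ n k j))
    (hmeasζ : ∀ n k j, Measurable (ζ n k j))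
    (hindep : ∀ n, iIndep
      (fun j : ℕ => ⨆ k : ℕ,
        (MeasurableSpace.comap (ξ n k j) (borel ℝ) ⊔
         MeasurableSpace.comap (ζ n k j) (borel ℝ))) ℙ)
    (M : ℝ)
    (hmom : ∀ n k j, ∫ ω, ((ξ n k j ω) ^ 8 + (ζ n k j ω) ^ 8) ∂ℙ ≤ M)
    (hint : ∀ n k j, Integrable (fun ω => (ξ n k j ω) ^ 8 + (ζ n k j ω) ^ 8) ℙ)
    (K : ℝ)
    (Kn : ℕ → ℕ)
    (hKn : Tendsto (fun n => (Kn n : ℝ) / n) atTop (nhds K)) :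
    ∀ᵐ ω ∂(ℙ : Measure Ω),
      Tendsto (fun n : ℕ =>
        (n : ℝ) ^ (-2 : ℤ) *
          ∑ k ∈ Finset.Icc 1 (Kn n), (k : ℝ)⁻¹ *
            ∑ j ∈ Finset.Icc 1 k,
              (ξ n k j ω * ζ n k j ω - ∫ ω', ξ n k j ω' * ζ n k j ω' ∂ℙ))
        atTop (nhds 0) := by
  set P : ℕ → ℕ → ℕ → Ω → ℝ := fun n k j => ξ n k j * ζ n k j
  have hP : ∀ n k j, MemLp (P n k j) 2 ℙ := fun n k j =>
    memLp_two_mul_of_integrable_pow_eight (hmeasξ n k j).aestronglyMeasurable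
      (hmeasζ n k j).aestronglyMeasurable (hint n k j)
  have hPvar : ∀ n k j, Var[P n k j; ℙ] ≤ M + 1 := fun n k j =>
    (variance_mul_le_integral_pow_eight_add_one (hmeasξ n k j).aestronglyMeasurable
      (hmeasζ n k j).aestronglyMeasurable (hint n k j)).trans (by linarith [hmom n k j])
  have hPm : ∀ n k j, Measurable[⨆ k : ℕ, (MeasurableSpace.comap (ξ n k j) (borel ℝ) ⊔
      MeasurableSpace.comap (ζ n k j) (borel ℝ))] (P n k j) := fun n k j =>
    (Measurable.of_comap_le (le_iSup_of_le k le_sup_left)).mul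
      (Measurable.of_comap_le (le_iSup_of_le k le_sup_right))
  set Z : ℕ → Ω → ℝ := fun n ω =>
    (n : ℝ) ^ (-2 : ℤ) * ∑ k ∈ Icc 1 (Kn n), (k : ℝ)⁻¹ * ∑ j ∈ Icc 1 k, P n k j ω
  have hZ : ∀ n, MemLp (Z n) 2 ℙ := fun n =>
    (memLp_finsetSum _ fun k _ => (memLp_finsetSum _ fun j _ => hP n k j).const_mul _).const_mul _
  have hZvar : ∀ n, Var[Z n; ℙ] ≤ 2 * (M + 1) * ((Kn n / n) ^ 2 / n ^ 2) := fun n => by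
    rw [variance_const_mul]
    calc _ ≤ ((n : ℝ) ^ (-2 : ℤ)) ^ 2 * (2 * (M + 1) * Kn n ^ 2) :=
          mul_le_mul_of_nonneg_left
            (variance_sum_inv_mul_sum_le (hindep n) (hPm n) (hP n) (hPvar n) (Kn n)) (sq_nonneg _)
      _ = _ := by rw [zpow_neg, zpow_ofNat]; ring
  have hsum : Summable fun n => Var[Z n; ℙ] :=
    .of_nonneg_of_le (fun n => variance_nonneg _ _) hZvar
      ((summable_sq_div_sq_of_tendsto hKn).mul_left _)
  filter_upwards [ae_tendsto_sub_integral_of_summable_variance hZ hsum] with ω hω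
  exact hω.congr fun n =>
    const_mul_sum_mul_sum_sub_integral (fun k j => (hP n k j).integrable one_le_two) _ _ _ _ ω

theorem stmt6
    {Ω : Type*} [MeasureSpace Ω] [IsProbabilityMeasure (ℙ : Measure Ω)]
    (ξ ζ : ℕ → ℕ → ℕ → Ω → ℝ)  -- ξ n k j, ζ n k j
    (hmeasξ : ∀ n k j, Measurable (ξ n k j))
    (hmeasζ : ∀ n k j, Measurable (ζ n k j))
    (hindep : ∀ n, iIndep
      (fun j : ℕ => ⨆ k : ℕ,
        (MeasurableSpace.comap (ξ n k j) (borel ℝ) ⊔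
         MeasurableSpace.comap (ζ n k j) (borel ℝ))) ℙ)
    (M : ℝ)
    (hmom : ∀ n k j, ∫ ω, ((ξ n k j ω) ^ 8 + (ζ n k j ω) ^ 8) ∂ℙ ≤ M)
    (hint : ∀ n k j, Integrable (fun ω => (ξ n k j ω) ^ 8 + (ζ n k j ω) ^ 8) ℙ)
    (K : ℝ) (hK : 0 < K)
    (Kn : ℕ → ℕ) (hKn0 : ∀ n, 0 < Kn n)
    (hKn : Tendsto (fun n => (Kn n : ℝ) / n) atTop (nhds K)) :
    ∀ᵐ ω ∂(ℙ : Measure Ω),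
      Tendsto (fun n : ℕ =>
        (n : ℝ) ^ (-2 : ℤ) *
          ∑ k ∈ Finset.Icc 1 (Kn n), (k : ℝ)⁻¹ *
            ∑ j ∈ Finset.Icc 1 k,
              (ξ n k j ω * ζ n k j ω - ∫ ω', ξ n k j ω' * ζ n k j ω' ∂ℙ))
        atTop (nhds 0) :=
  stmt6_general ξ ζ hmeasξ hmeasζ hindep M hmom hint K Kn hKn
end

section
/- Let $\beta_0 \ne 0$ and $\varrho_0 \in (-1,1)$. Define $A(\beta,\varrho) := -\frac{KL}{2}\log(2\pi\beta^2) - \frac{KL(\sigma^2(\varrho) + m^2(\beta,\varrho))}{2\beta^2} - \frac{K^2 m^2(\beta,\varrho)}{4\beta^2}$ where $m(\beta,\varrho) = \frac{\beta_0^2}{2(1-\varrho_0)} - \frac{\beta^2}{2(1-\varrho)} + \frac{(\varrho_0-\varrho)\beta_0^2}{2(1-\varrho_0)^2}$ and $\sigma^2(\varrho) = \beta_0^2(1 + \frac{(\varrho_0-\varrho)^2}{1-\varrho_0^2})$, for $K, L > 0$. Then for $\beta \ne 0$, $\varrho \in (-1,1)$: $A(\beta_0,\varrho_0) - A(\beta,\varrho)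 = \frac{KL}{2}\left(\frac{\beta_0^2}{\beta^2} - 1 - \log\frac{\beta_0^2}{\beta^2}\right) + \frac{KL(\varrho_0-\varrho)^2\beta_0^2}{2\beta^2(1-\varrho_0^2)} + \frac{K(K+2L)}{16\beta^2}\left(\frac{\beta_0^2(\varrho_0-\varrho)}{(1-\varrho_0)^2} + \frac{\beta_0^2}{1-\varrho_0} - \frac{\beta^2}{1-\varrho}\right)^2$, and this difference is nonnegative, vanishing if and only if $(\beta^2, \varrho) = (\beta_0^2, \varrho_0)$. -/
open Real

set_option maxHeartbeats 1000000

theorem stmt14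
    (β₀ : ℝ) (hβ₀ : β₀ ≠ 0) (ϱ₀ : ℝ) (hϱ₀ : ϱ₀ ∈ Set.Ioo (-1 : ℝ) 1)
    (K L : ℝ) (hK : 0 < K) (hL : 0 < L)
    (m : ℝ → ℝ → ℝ)
    (hm : ∀ β ϱ, m β ϱ =
      β₀ ^ 2 / (2 * (1 - ϱ₀)) - β ^ 2 / (2 * (1 - ϱ))
        + (ϱ₀ - ϱ) * β₀ ^ 2 / (2 * (1 - ϱ₀) ^ 2))
    (σ2 : ℝ → ℝ)
    (hσ2 : ∀ ϱ, σ2 ϱ = β₀ ^ 2 * (1 + (ϱ₀ - ϱ) ^ 2 / (1 - ϱ₀ ^ 2)))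
    (A : ℝ → ℝ → ℝ)
    (hA : ∀ β ϱ, A β ϱ =
      -(K * L / 2) * Real.log (2 * π * β ^ 2)
        - K * L * (σ2 ϱ + (m β ϱ) ^ 2) / (2 * β ^ 2)
        - K ^ 2 * (m β ϱ) ^ 2 / (4 * β ^ 2)) :
    ∀ β ϱ : ℝ, β ≠ 0 → ϱ ∈ Set.Ioo (-1 : ℝ) 1 →
      (A β₀ ϱ₀ - A β ϱ =
        K * L / 2 * (β₀ ^ 2 / β ^ 2 - 1 - Real.log (β₀ ^ 2 / β ^ 2))
        + K * L * (ϱ₀ - ϱ) ^ 2 * β₀ ^ 2 / (2 * β ^ 2 * (1 - ϱ₀ ^ 2))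
        + K * (K + 2 * L) / (16 * β ^ 2) *
            (β₀ ^ 2 * (ϱ₀ - ϱ) / (1 - ϱ₀) ^ 2 + β₀ ^ 2 / (1 - ϱ₀)
              - β ^ 2 / (1 - ϱ)) ^ 2) ∧
      0 ≤ A β₀ ϱ₀ - A β ϱ ∧
      (A β₀ ϱ₀ - A β ϱ = 0 ↔ (β ^ 2 = β₀ ^ 2 ∧ ϱ = ϱ₀)) := by
  obtain ⟨h01, h02⟩ := hϱ₀
  have h1ϱ₀ : (0:ℝ) < 1 - ϱ₀ := by linarith
  have h2ϱ₀ : (0:ℝ) < 1 + ϱ₀ := by linarith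
  have hsq : (0:ℝ) < 1 - ϱ₀ ^ 2 := by nlinarith
  have hβ₀2 : (0:ℝ) < β₀ ^ 2 := by positivity
  intro β ϱ hβ hϱ
  obtain ⟨h11, h12⟩ := hϱ
  have h1ϱ : (0:ℝ) < 1 - ϱ := by linarith
  have hβ2 : (0:ℝ) < β ^ 2 := by positivity
  have hlog : Real.log (β₀ ^ 2 / β ^ 2)
      = Real.log (2 * π * β₀ ^ 2) - Real.log (2 * π * β ^ 2) := by
    rw [← Real.log_div (by positivity) (by positivity)]
    congr 1
    field_simp
  have hid : A β₀ ϱ₀ - A β ϱ =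
      K * L / 2 * (β₀ ^ 2 / β ^ 2 - 1 - Real.log (β₀ ^ 2 / β ^ 2))
      + K * L * (ϱ₀ - ϱ) ^ 2 * β₀ ^ 2 / (2 * β ^ 2 * (1 - ϱ₀ ^ 2))
      + K * (K + 2 * L) / (16 * β ^ 2) *
          (β₀ ^ 2 * (ϱ₀ - ϱ) / (1 - ϱ₀) ^ 2 + β₀ ^ 2 / (1 - ϱ₀)
            - β ^ 2 / (1 - ϱ)) ^ 2 := by
    rw [hA, hA, hm, hm, hσ2, hσ2, hlog]
    field_simp
    ring
  have hx : (0:ℝ) < β₀ ^ 2 / β ^ 2 := by positivity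
  have hl := Real.log_le_sub_one_of_pos hx
  have t1 : 0 ≤ K * L / 2 * (β₀ ^ 2 / β ^ 2 - 1 - Real.log (β₀ ^ 2 / β ^ 2)) := by
    have h : 0 ≤ β₀ ^ 2 / β ^ 2 - 1 - Real.log (β₀ ^ 2 / β ^ 2) := by linarith
    have : (0:ℝ) ≤ K * L / 2 := by positivity
    exact mul_nonneg this h
  have t2 : 0 ≤ K * L * (ϱ₀ - ϱ) ^ 2 * β₀ ^ 2 / (2 * β ^ 2 * (1 - ϱ₀ ^ 2)) := by
    apply div_nonneg (by positivity)
    nlinarith [mul_pos hβ2 hsq]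
  have t3 : 0 ≤ K * (K + 2 * L) / (16 * β ^ 2) *
      (β₀ ^ 2 * (ϱ₀ - ϱ) / (1 - ϱ₀) ^ 2 + β₀ ^ 2 / (1 - ϱ₀)
        - β ^ 2 / (1 - ϱ)) ^ 2 := by
    apply mul_nonneg (div_nonneg (by nlinarith) (by positivity)) (sq_nonneg _)
  refine ⟨hid, by rw [hid]; linarith, ?_⟩
  constructor
  · intro h
    rw [hid] at h
    have e1 : K * L / 2 * (β₀ ^ 2 / β ^ 2 - 1 - Real.log (β₀ ^ 2 / β ^ 2)) = 0 := by
      linarith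
    have e2 : K * L * (ϱ₀ - ϱ) ^ 2 * β₀ ^ 2 / (2 * β ^ 2 * (1 - ϱ₀ ^ 2)) = 0 := by
      linarith
    have hKL2 : K * L / 2 ≠ 0 := by positivity
    have hexpr : β₀ ^ 2 / β ^ 2 - 1 - Real.log (β₀ ^ 2 / β ^ 2) = 0 := by
      rcases mul_eq_zero.mp e1 with h' | h'
      · exact absurd h' hKL2
      · exact h'
    have hx1 : β₀ ^ 2 / β ^ 2 = 1 := by
      by_contra hne
      have := Real.log_lt_sub_one_of_pos hx hne
      linarith
    have hb : β ^ 2 = β₀ ^ 2 := by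
      field_simp at hx1
      linarith
    refine ⟨hb, ?_⟩
    have hden : 2 * β ^ 2 * (1 - ϱ₀ ^ 2) ≠ 0 := by
      have : (0:ℝ) < 2 * β ^ 2 * (1 - ϱ₀ ^ 2) := by nlinarith [mul_pos hβ2 hsq]
      exact this.ne'
    have hnum : K * L * (ϱ₀ - ϱ) ^ 2 * β₀ ^ 2 = 0 :=
      (div_eq_zero_iff.mp e2).resolve_right hden
    have : (ϱ₀ - ϱ) ^ 2 = 0 := by
      have hKL : K * L ≠ 0 := by positivity
      have hb0 : β₀ ^ 2 ≠ 0 := hβ₀2.ne'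
      rcases mul_eq_zero.mp hnum with h' | h'
      · rcases mul_eq_zero.mp h' with h'' | h''
        · exact absurd h'' hKL
        · exact h''
      · exact absurd h' hb0
    have := pow_eq_zero_iff (two_ne_zero) |>.mp this
    linarith [sub_eq_zero.mp this]
  · rintro ⟨hb, hr⟩
    rw [hid, hb, hr]
    rw [div_self hβ₀2.ne', Real.log_one]
    ring
end

section
/- Let $\sigma_{1,1} = \frac{2KL}{\beta_0^2} + \frac{K(K+2L)}{2(1-\varrho_0)^2}$, $\sigma_{2,2} = \frac{KL}{1-\varrho_0^2} + \frac{K(K+2L)\beta_0^2}{2(1-\varrho_0)^4}$, and $\sigma_{1,2} = \frac{K(K+2L)\beta_0}{2(1-\varrho_0)^3}$, where $K, L > 0$, $\beta_0 \ne 0$, $\varrho_0 \in (-1,1)$. Then $\sigma_{1,1}\sigma_{2,2} - \sigma_{1,2}^2 > 0$; in particular the $2\times 2$ matrix $\begin{pmatrix}\sigma_{1,1} & \sigma_{1,2} \\ \sigma_{1,2} & \sigma_{2,2}\end{pmatrix}$ is positive definite and invertible. -/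
/-!
Write `p = 2KL/β₀²`, `q = K(K+2L)/(2(1-ϱ₀)²)`, `r = KL/(1-ϱ₀²)` and `t = β₀/(1-ϱ₀)`; all of
`p, q, r` are positive for `ϱ₀ ∈ (-1, 1)`. Then `σ₁₁ = p + q`, `σ₂₂ = r + q t²`, `σ₁₂ = q t`, and
the determinant collapses to `pr + q(p t² + r) > 0`. Together with `σ₁₁ > 0` this is Sylvester's
criterion for a symmetric `2 × 2` matrix.
-/

theorem add_mul_add_sub_sq_pos {R : Type*} [CommRing R] [LinearOrder R] [IsStrictOrderedRing R]
    {p q r : R} (t : R) (hp : 0 < p) (hq : 0 ≤ q) (hr : 0 < r) :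
    0 < (p + q) * (r + q * t ^ 2) - (q * t) ^ 2 := by
  have hcollapse : (p + q) * (r + q * t ^ 2) - (q * t) ^ 2 = p * r + q * (p * t ^ 2 + r) := by
    ring
  rw [hcollapse]
  positivity

namespace Matrix

theorem posDef_fin_two_of_pos_of_det_pos {R : Type*} [Field R] [LinearOrder R]
    [IsStrictOrderedRing R] [StarRing R] [TrivialStar R] {a b c : R}
    (ha : 0 < a) (hdet : 0 < a * b - c ^ 2) : (!![a, c; c, b]).PosDef := by
  refine PosDef.of_dotProduct_mulVec_pos ?_ fun x hx => ?_
  · exact isHermitian_iff_isSymm.mpr <| IsSymm.ext fun i j => by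
      fin_cases i <;> fin_cases j <;> rfl
  have hquad : star x ⬝ᵥ (!![a, c; c, b] *ᵥ x)
      = a * x 0 ^ 2 + 2 * c * x 0 * x 1 + b * x 1 ^ 2 := by
    simp only [star_trivial, dotProduct, mulVec, Fin.sum_univ_two, cons_val', cons_val_zero,
      cons_val_one, empty_val', cons_val_fin_one, of_apply]
    ring
  have hcomplete : a * (a * x 0 ^ 2 + 2 * c * x 0 * x 1 + b * x 1 ^ 2)
      = (a * x 0 + c * x 1) ^ 2 + (a * b - c ^ 2) * x 1 ^ 2 := by
    ring
  rw [hquad]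
  refine pos_of_mul_pos_right (hcomplete ▸ ?_) ha.le
  rcases eq_or_ne (x 1) 0 with hx1 | hx1
  · have hx0 : x 0 ≠ 0 := fun hx0 => hx (funext fun i => by fin_cases i <;> assumption)
    rw [hx1]
    simp only [mul_zero, add_zero, ne_eq, OfNat.ofNat_ne_zero, not_false_eq_true, zero_pow]
    positivity
  · exact add_pos_of_nonneg_of_pos (sq_nonneg _) (mul_pos hdet (by positivity))

end Matrix

theorem stmt18
    (K L β₀ ϱ₀ : ℝ) (hK : 0 < K) (hL : 0 < L) (hβ₀ : β₀ ≠ 0)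
    (hϱ₀ : ϱ₀ ∈ Set.Ioo (-1 : ℝ) 1)
    (σ11 σ22 σ12 : ℝ)
    (h11 : σ11 = 2 * K * L / β₀ ^ 2 + K * (K + 2 * L) / (2 * (1 - ϱ₀) ^ 2))
    (h22 : σ22 = K * L / (1 - ϱ₀ ^ 2) + K * (K + 2 * L) * β₀ ^ 2 / (2 * (1 - ϱ₀) ^ 4))
    (h12 : σ12 = K * (K + 2 * L) * β₀ / (2 * (1 - ϱ₀) ^ 3)) :
    0 < σ11 * σ22 - σ12 ^ 2 ∧
    (!![σ11, σ12; σ12, σ22] : Matrix (Fin 2) (Fin 2) ℝ).PosDef ∧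
    IsUnit (!![σ11, σ12; σ12, σ22] : Matrix (Fin 2) (Fin 2) ℝ) := by
  obtain ⟨hlo, hhi⟩ := hϱ₀
  have hgap : 0 < 1 - ϱ₀ := sub_pos.mpr hhi
  have hgap_sq : 0 < 1 - ϱ₀ ^ 2 := by nlinarith
  have hq : 0 < K * (K + 2 * L) / (2 * (1 - ϱ₀) ^ 2) := by positivity
  have h22' : σ22 = K * L / (1 - ϱ₀ ^ 2)
      + K * (K + 2 * L) / (2 * (1 - ϱ₀) ^ 2) * (β₀ / (1 - ϱ₀)) ^ 2 := by
    rw [h22]; field_simp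
  have h12' : σ12 = K * (K + 2 * L) / (2 * (1 - ϱ₀) ^ 2) * (β₀ / (1 - ϱ₀)) := by
    rw [h12]; field_simp
  have hdet : 0 < σ11 * σ22 - σ12 ^ 2 := by
    rw [h11, h22', h12']
    exact add_mul_add_sub_sq_pos _ (by positivity) hq.le (by positivity)
  have hσ11 : 0 < σ11 := by rw [h11]; positivity
  have hpos := Matrix.posDef_fin_two_of_pos_of_det_pos hσ11 hdet
  exact ⟨hdet, hpos, hpos.isUnit⟩
end
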